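/- There exists a finite constant K, depending only on P_X and W, such that for all integers n_1 ≥ 1 and I ≥ 1 and all real γ ≥ 0, setting n_j = n_1 + (j−1)I, one has n_1 + I · Σ_{j=1}^∞ E[exp(−[S_{n_j} − γ]^+)] ≤ γ/C + K·(n_1 + I). -/

import Mathlib

open MeasureTheory ProbabilityTheory

/-- Output marginal `P_Y(y) = Σ_x P_X(x) W(y|x)`. -/
noncomputable def outDist {𝒳 𝒴 : Type*} [Fintype 𝒳] (pX : 𝒳 → ℝ) (W : 𝒳 → 𝒴 → ℝ)
    (y : 𝒴) : ℝ := ∑ x, pX x * W x y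

/-- Information density `i(x;y) = log (W(y|x) / P_Y(y))`. -/
noncomputable def infoDen {𝒳 𝒴 : Type*} [Fintype 𝒳] (pX : 𝒳 → ℝ) (W : 𝒳 → 𝒴 → ℝ)
    (x : 𝒳) (y : 𝒴) : ℝ := Real.log (W x y / outDist pX W y)

/-!
Let `τ` be the first time the random walk `S` reaches `γ`. Since the increments are bounded by
`b` and have mean `C > 0`, Wald's identity gives `C · E[τ] ≤ γ + b`, i.e.
`Σ_n P(τ > n) ≤ (γ + b)/C`.
On `{τ = m}` with `m ≤ n` one has `exp(-[S_n - γ]⁺) ≤ exp(-(S_n - S_m)/2)`, and by independence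
`E[exp(-(S_n - S_m)/2); τ = m] = P(τ = m) ρⁿ⁻ᵐ` with `ρ = E[exp(-i(X;Y)/2)] < 1`, because
`E[exp(-i(X;Y))] = 1` and `i(X;Y)` is not a.s. zero. Hence
`E[exp(-[S_n - γ]⁺)] ≤ P(τ > n) + Σ_{m ≤ n} P(τ = m) ρⁿ⁻ᵐ`. Summing along `n_j = n₁ + jI`, the
first terms contribute at most `I + (γ + b)/C` after multiplication by `I` since `P(τ > n)` is
nonincreasing, and the second at most `I/(1 - ρ)`.
-/

open Finset

lemma sum_pow_le_of_injOn {ρ : ℝ} (h0 : 0 ≤ ρ) (h1 : ρ < 1) {ι : Type*} (s : Finset ι)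
    {e : ι → ℕ} (he : Set.InjOn e s) : ∑ j ∈ s, ρ ^ e j ≤ (1 - ρ)⁻¹ := by
  classical
  rw [← sum_image he, ← tsum_geometric_of_lt_one h0 h1]
  exact (summable_geometric_of_lt_one h0 h1).sum_le_tsum _ fun i _ => pow_nonneg h0 i

lemma sum_range_mul_le_sum_Ico_of_antitone {u : ℕ → ℝ} (hu : Antitone u) (a I J : ℕ) :
    ∑ j ∈ range J, I * u (a + (j + 1) * I) ≤ ∑ k ∈ Ico a (a + J * I), u k := by
  induction J with
  | zero => simp
  | succ J ih =>
    have hblock :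
        (I : ℝ) * u (a + (J + 1) * I) ≤ ∑ k ∈ Ico (a + J * I) (a + (J + 1) * I), u k := by
      simpa [add_mul] using card_nsmul_le_sum (Ico (a + J * I) (a + (J + 1) * I)) u _
        fun k hk => hu (mem_Ico.1 hk).2.le
    rw [sum_range_succ, ← sum_Ico_consecutive u (n := a + J * I) (by omega) (by nlinarith)]
    exact add_le_add ih hblock

lemma sum_range_mul_le_of_antitone {u : ℕ → ℝ} (hu : Antitone u) (hu0 : ∀ n, 0 ≤ u n)
    (hu1 : ∀ n, u n ≤ 1) {B : ℝ} (hB : ∀ N, ∑ k ∈ range N, u k ≤ B) (a I J : ℕ) :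
    ∑ j ∈ range J, I * u (a + j * I) ≤ I + B := by
  cases J with
  | zero => simpa using add_nonneg (Nat.cast_nonneg I) (by simpa using hB 0)
  | succ J =>
    rw [sum_range_succ']
    have htail : ∑ j ∈ range J, (I : ℝ) * u (a + (j + 1) * I) ≤ B :=
      calc _ ≤ ∑ k ∈ Ico a (a + J * I), u k := sum_range_mul_le_sum_Ico_of_antitone hu a I J
        _ ≤ ∑ k ∈ range (a + J * I), u k :=
          sum_le_sum_of_subset_of_nonneg
            (by rw [range_eq_Ico]; exact Ico_subset_Ico_left (Nat.zero_le a)) fun k _ _ => hu0 k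
        _ ≤ B := hB _
    have hhead : (I : ℝ) * u (a + 0 * I) ≤ I := mul_le_of_le_one_right (Nat.cast_nonneg I) (hu1 _)
    linarith

lemma sum_sum_mul_pow_sub_le {ρ : ℝ} (h0 : 0 ≤ ρ) (h1 : ρ < 1) {P : ℕ → ℝ} (hP0 : ∀ m, 0 ≤ P m)
    (hP1 : ∀ M, ∑ m ∈ range M, P m ≤ 1) {n : ℕ → ℕ} (hn : StrictMono n) (J : ℕ) :
    ∑ j ∈ range J, ∑ m ∈ range (n j + 1), P m * ρ ^ (n j - m) ≤ (1 - ρ)⁻¹ := by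
  classical
  rw [sum_comm' (t' := range (n J + 1)) (s' := fun m => (range J).filter (m ≤ n ·))]
  swap
  · intro j m
    simp only [mem_range, mem_filter]
    constructor
    · rintro ⟨hj, hm⟩
      exact ⟨⟨hj, by omega⟩, by have := hn hj; omega⟩
    · rintro ⟨⟨hj, hm⟩, -⟩
      exact ⟨hj, by omega⟩
  calc ∑ m ∈ range (n J + 1), ∑ j ∈ (range J).filter (m ≤ n ·), P m * ρ ^ (n j - m)
      ≤ ∑ m ∈ range (n J + 1), P m * (1 - ρ)⁻¹ := by
        refine sum_le_sum fun m _ => ?_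
        rw [← mul_sum]
        refine mul_le_mul_of_nonneg_left (sum_pow_le_of_injOn h0 h1 _ ?_) (hP0 m)
        intro i hi j hj hij
        simp only [coe_filter, mem_range, Set.mem_ofPred_eq] at hi hj
        exact hn.injective (by simp only at hij; omega)
    _ ≤ (1 - ρ)⁻¹ := by
        rw [← sum_mul]
        exact mul_le_of_le_one_left (inv_nonneg.2 (by linarith)) (hP1 _)

section Crossing

variable (γ : ℝ)

/- For the first time `τ` at which the partial sums of `x` reach `γ`, `stayBelow γ n` is the event
`τ > n` and `firstCrossing γ m` the event `τ = m`. -/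
def stayBelow (n : ℕ) : Set (ℕ → ℝ) := {x | ∀ l ≤ n, ∑ k ∈ range l, x k < γ}

def firstCrossing (m : ℕ) : Set (ℕ → ℝ) :=
  {x | γ ≤ ∑ k ∈ range m, x k ∧ ∀ l < m, ∑ k ∈ range l, x k < γ}

variable {γ}

lemma sum_range_eq_of_eqOn {x y : ℕ → ℝ} {n l : ℕ} (h : ∀ i ∈ Set.Iio n, x i = y i)
    (hl : l ≤ n) : ∑ k ∈ range l, x k = ∑ k ∈ range l, y k :=
  sum_congr rfl fun k hk => h k ((mem_range.1 hk).trans_le hl)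

lemma dependsOn_indicator_stayBelow (n : ℕ) :
    DependsOn ((stayBelow γ n).indicator (1 : (ℕ → ℝ) → ℝ)) (Set.Iio n) := by
  intro x y h
  have hxy : x ∈ stayBelow γ n ↔ y ∈ stayBelow γ n :=
    forall₂_congr fun l hl => by rw [sum_range_eq_of_eqOn h hl]
  classical
  simp only [Set.indicator_apply, hxy, Pi.one_apply]

lemma dependsOn_indicator_firstCrossing (m : ℕ) :
    DependsOn ((firstCrossing γ m).indicator (1 : (ℕ → ℝ) → ℝ)) (Set.Iio m) := by
  intro x y h
  have hxy : x ∈ firstCrossing γ m ↔ y ∈ firstCrossing γ m := by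
    refine and_congr (by rw [sum_range_eq_of_eqOn h le_rfl]) (forall₂_congr fun l hl => ?_)
    rw [sum_range_eq_of_eqOn h hl.le]
  classical
  simp only [Set.indicator_apply, hxy, Pi.one_apply]

lemma exists_mem_firstCrossing_of_notMem_stayBelow {x : ℕ → ℝ} {n : ℕ}
    (hx : x ∉ stayBelow γ n) : ∃ t ≤ n, x ∈ firstCrossing γ t := by
  classical
  simp only [stayBelow, Set.mem_ofPred_eq, not_forall, not_lt] at hx
  obtain ⟨l, hln, hl⟩ := hx
  have hex : ∃ l, γ ≤ ∑ k ∈ range l, x k := ⟨l, hl⟩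
  exact ⟨Nat.find hex, (Nat.find_min' hex hl).trans hln, Nat.find_spec hex,
    fun l hl => not_le.1 (Nat.find_min hex hl)⟩

lemma mem_stayBelow_iff_of_mem_firstCrossing {x : ℕ → ℝ} {t : ℕ} (hx : x ∈ firstCrossing γ t)
    (k : ℕ) : x ∈ stayBelow γ k ↔ k < t :=
  ⟨fun h => not_le.1 fun hkt => (h t hkt).not_ge hx.1,
    fun hkt l hlk => hx.2 l (hlk.trans_lt hkt)⟩

lemma eq_of_mem_firstCrossing {x : ℕ → ℝ} {s t : ℕ} (hs : x ∈ firstCrossing γ s)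
    (ht : x ∈ firstCrossing γ t) : s = t := by
  by_contra hne
  rcases Nat.lt_or_gt_of_ne hne with h | h
  · exact (ht.2 s h).not_ge hs.1
  · exact (hs.2 t h).not_ge ht.1

lemma sum_indicator_firstCrossing_le_one (x : ℕ → ℝ) (s : Finset ℕ) :
    ∑ m ∈ s, (firstCrossing γ m).indicator (1 : (ℕ → ℝ) → ℝ) x ≤ 1 := by
  by_cases h : ∃ t ∈ s, x ∈ firstCrossing γ t
  · obtain ⟨t, hts, ht⟩ := h
    rw [sum_eq_single t (fun m _ hmt => Set.indicator_of_notMem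
      (fun hm => hmt (eq_of_mem_firstCrossing hm ht)) _) (fun h => (h hts).elim)]
    exact Set.indicator_le_self' (fun _ _ => zero_le_one) x
  · push Not at h
    rw [sum_eq_zero fun m hm => Set.indicator_of_notMem (h m hm) _]
    exact zero_le_one

lemma sum_range_le_add_of_forall_lt {x : ℕ → ℝ} {b : ℝ} (hb : ∀ k, x k ≤ b) (hγb : 0 ≤ γ + b)
    {t : ℕ} (ht : ∀ l < t, ∑ k ∈ range l, x k < γ) : ∑ k ∈ range t, x k ≤ γ + b := by
  cases t with
  | zero => simpa using hγb
  | succ t =>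
    rw [sum_range_succ]
    linarith [ht t t.lt_succ_self, hb t]

/-- The pathwise form of Wald's identity for the first passage time. -/
lemma sum_indicator_stayBelow_mul_le {x : ℕ → ℝ} {b : ℝ} (hb : ∀ k, x k ≤ b) (hγb : 0 ≤ γ + b)
    (N : ℕ) : ∑ k ∈ range N, (stayBelow γ k).indicator 1 x * x k ≤ γ + b := by
  by_cases hN : x ∈ stayBelow γ N
  · have hall : ∀ k ∈ range N, (stayBelow γ k).indicator 1 x * x k = x k := fun k hk => by
      have hk : x ∈ stayBelow γ k := fun l hl => hN l (hl.trans (mem_range.1 hk).le)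
      rw [Set.indicator_of_mem hk, Pi.one_apply, one_mul]
    rw [sum_congr rfl hall]
    exact sum_range_le_add_of_forall_lt hb hγb fun l hl => hN l hl.le
  · obtain ⟨t, htN, ht⟩ := exists_mem_firstCrossing_of_notMem_stayBelow hN
    have hterm : ∀ k ∈ range N,
        (stayBelow γ k).indicator 1 x * x k = if k < t then x k else 0 := by
      intro k _
      by_cases hkt : k < t
      · rw [if_pos hkt, Set.indicator_of_mem ((mem_stayBelow_iff_of_mem_firstCrossing ht k).2 hkt),
          Pi.one_apply, one_mul]
      · rw [if_neg hkt, Set.indicator_of_notMem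
          (fun h => hkt ((mem_stayBelow_iff_of_mem_firstCrossing ht k).1 h)), zero_mul]
    rw [sum_congr rfl hterm, ← sum_filter, show (range N).filter (· < t) = range t by
      ext k; simp only [mem_filter, mem_range]; omega]
    exact sum_range_le_add_of_forall_lt hb hγb ht.2

/-- The factor `1/2` in the exponent is what makes `E[exp(-x/2)]` smaller than one. -/
lemma exp_neg_max_sub_le (x : ℕ → ℝ) (n : ℕ) :
    Real.exp (-max (∑ k ∈ range n, x k - γ) 0) ≤ (stayBelow γ n).indicator 1 x +
      ∑ m ∈ range (n + 1),
        (firstCrossing γ m).indicator 1 x * ∏ k ∈ Ico m n, Real.exp (-x k / 2) := by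
  have hterm : ∀ m, 0 ≤ (firstCrossing γ m).indicator 1 x * ∏ k ∈ Ico m n, Real.exp (-x k / 2) :=
    fun m => mul_nonneg (Set.indicator_nonneg (fun _ _ => zero_le_one) x)
      (prod_nonneg fun _ _ => (Real.exp_pos _).le)
  by_cases hn : x ∈ stayBelow γ n
  · rw [Set.indicator_of_mem hn, Pi.one_apply]
    have hle : Real.exp (-max (∑ k ∈ range n, x k - γ) 0) ≤ 1 :=
      Real.exp_le_one_iff.2 (neg_nonpos.2 (le_max_right _ _))
    linarith [sum_nonneg fun m (_ : m ∈ range (n + 1)) => hterm m]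
  obtain ⟨t, htn, ht⟩ := exists_mem_firstCrossing_of_notMem_stayBelow hn
  have hcross : Real.exp (-max (∑ k ∈ range n, x k - γ) 0) ≤
      (firstCrossing γ t).indicator 1 x * ∏ k ∈ Ico t n, Real.exp (-x k / 2) := by
    rw [Set.indicator_of_mem ht, Pi.one_apply, one_mul, ← Real.exp_sum, Real.exp_le_exp, ← sum_div,
      sum_neg_distrib, sum_Ico_eq_sub _ htn]
    rcases le_total (∑ k ∈ range t, x k) (∑ k ∈ range n, x k) with h | h
    · linarith [le_max_left (∑ k ∈ range n, x k - γ) 0, ht.1]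
    · linarith [le_max_right (∑ k ∈ range n, x k - γ) 0]
  calc _ ≤ _ := hcross
    _ ≤ ∑ m ∈ range (n + 1),
          (firstCrossing γ m).indicator 1 x * ∏ k ∈ Ico m n, Real.exp (-x k / 2) :=
        single_le_sum (fun m _ => hterm m) (mem_range.2 (by omega))
    _ ≤ _ := le_add_of_nonneg_left (Set.indicator_nonneg (fun _ _ => zero_le_one) x)

end Crossing

lemma DependsOn.comp_pointwise {E : Type*} {Φ : (ℕ → ℝ) → ℝ} {s : Set ℕ} (hΦ : DependsOn Φ s)
    (f : E → ℝ) : DependsOn (fun v : ℕ → E => Φ fun i => f (v i)) s :=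
  fun v w h => hΦ fun i hi => by rw [h i hi]

lemma DependsOn.mul_prod_Ico {E : Type*} {φ : (ℕ → E) → ℝ} {m n : ℕ}
    (hφ : DependsOn φ (Set.Iio m)) (g : E → ℝ) (hmn : m ≤ n) :
    DependsOn (fun v => φ v * ∏ k ∈ Ico m n, g (v k)) (Set.Iio n) := by
  intro v w h
  dsimp only
  rw [hφ fun i hi => h i (lt_of_lt_of_le hi hmn),
    prod_congr rfl fun k hk => by rw [h k (mem_Ico.1 hk).2]]

section IID

variable {Ω E : Type*} [MeasurableSpace Ω] {μ : Measure Ω} [MeasurableSpace E]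
  [MeasurableSingletonClass E] [Fintype E] {V : ℕ → Ω → E}

lemma integrable_comp_of_dependsOn [IsFiniteMeasure μ] (hV : ∀ k, Measurable (V k))
    {φ : (ℕ → E) → ℝ} {n : ℕ} (hφ : DependsOn φ (Set.Iio n)) :
    Integrable (fun ω => φ fun i => V i ω) μ := by
  obtain ⟨g, rfl⟩ := dependsOn_iff_exists_comp.1 hφ
  exact Integrable.of_finite.comp_measurable (measurable_pi_lambda _ fun i => hV i)

lemma integral_mul_comp_of_dependsOn (hV : ∀ k, Measurable (V k)) (hind : iIndepFun V μ)
    {φ : (ℕ → E) → ℝ} {n : ℕ} (hφ : DependsOn φ (Set.Iio n)) (g : E → ℝ) :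
    ∫ ω, φ (fun i => V i ω) * g (V n ω) ∂μ = (∫ ω, φ fun i => V i ω ∂μ) * ∫ ω, g (V n ω) ∂μ := by
  rw [← coe_range] at hφ
  obtain ⟨Φ, rfl⟩ := dependsOn_iff_exists_comp.1 hφ
  have hg : Measurable fun u : ({n} : Finset ℕ) → E => g (u ⟨n, mem_singleton_self n⟩) :=
    measurable_of_countable _
  have hΦ : Measurable Φ := measurable_of_countable _
  exact ((hind.indepFun_finset (range n) {n} (by simp) hV).comp hΦ hg).integral_mul_eq_mul_integral
    (hΦ.comp (measurable_pi_lambda _ fun i => hV i)).aestronglyMeasurable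
    (hg.comp (measurable_pi_lambda _ fun i => hV i)).aestronglyMeasurable

lemma integral_comp_eq_sum [IsFiniteMeasure μ] {X : Ω → E} (hX : Measurable X) {q : E → ℝ}
    (hq : ∀ e, 0 ≤ q e) (hlaw : ∀ e, μ {ω | X ω = e} = ENNReal.ofReal (q e)) (g : E → ℝ) :
    ∫ ω, g (X ω) ∂μ = ∑ e, q e * g e := by
  rw [← integral_map hX.aemeasurable (measurable_of_countable g).aestronglyMeasurable,
    integral_fintype Integrable.of_finite]
  refine sum_congr rfl fun e _ => ?_
  rw [measureReal_def, Measure.map_apply hX (measurableSet_singleton e), smul_eq_mul]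
  change (μ {ω | X ω = e}).toReal * g e = _
  rw [hlaw, ENNReal.toReal_ofReal (hq e)]

lemma integral_mul_prod_Ico [IsFiniteMeasure μ] (hV : ∀ k, Measurable (V k)) (hind : iIndepFun V μ)
    {q : E → ℝ} (hq : ∀ e, 0 ≤ q e) (hlaw : ∀ k e, μ {ω | V k ω = e} = ENNReal.ofReal (q e))
    {φ : (ℕ → E) → ℝ} {m : ℕ} (hφ : DependsOn φ (Set.Iio m)) (g : E → ℝ) {n : ℕ} (hmn : m ≤ n) :
    ∫ ω, φ (fun i => V i ω) * ∏ k ∈ Ico m n, g (V k ω) ∂μ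
      = (∫ ω, φ fun i => V i ω ∂μ) * (∑ e, q e * g e) ^ (n - m) := by
  induction n, hmn using Nat.le_induction with
  | base => simp
  | succ n hmn ih =>
    simp_rw [prod_Ico_succ_top hmn, ← mul_assoc]
    rw [integral_mul_comp_of_dependsOn hV hind (hφ.mul_prod_Ico g hmn), ih,
      integral_comp_eq_sum (hV n) hq (hlaw n), Nat.sub_add_comm hmn, pow_succ, mul_assoc]

lemma mul_sum_integral_indicator_stayBelow_le [IsProbabilityMeasure μ]
    (hV : ∀ k, Measurable (V k)) (hind : iIndepFun V μ) {q : E → ℝ} (hq : ∀ e, 0 ≤ q e)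
    (hlaw : ∀ k e, μ {ω | V k ω = e} = ENNReal.ofReal (q e)) {f : E → ℝ} {C b γ : ℝ}
    (hC : ∑ e, q e * f e = C) (hb : ∀ e, f e ≤ b) (hγb : 0 ≤ γ + b) (N : ℕ) :
    C * ∑ k ∈ range N, ∫ ω, (stayBelow γ k).indicator 1 (fun i => f (V i ω)) ∂μ ≤ γ + b := by
  have hdep : ∀ k, DependsOn (fun v : ℕ → E => (stayBelow γ k).indicator 1 fun i => f (v i))
      (Set.Iio k) := fun k => (dependsOn_indicator_stayBelow k).comp_pointwise f
  have hterm : ∀ k ∈ range N, Integrable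
      (fun ω => (stayBelow γ k).indicator 1 (fun i => f (V i ω)) * f (V k ω)) μ := by
    intro k _
    have hdep' : DependsOn
        (fun v : ℕ → E => (stayBelow γ k).indicator 1 (fun i => f (v i)) * f (v k))
        (Set.Iio (k + 1)) := fun v w h =>
      congrArg₂ (· * ·) (hdep k fun i hi => h i (Nat.lt_succ_of_lt hi))
        (congrArg f (h k (Nat.lt_succ_self k)))
    exact integrable_comp_of_dependsOn hV hdep'
  calc C * ∑ k ∈ range N, ∫ ω, (stayBelow γ k).indicator 1 (fun i => f (V i ω)) ∂μ
      = ∑ k ∈ range N, ∫ ω, (stayBelow γ k).indicator 1 (fun i => f (V i ω)) * f (V k ω) ∂μ := by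
        rw [mul_sum]
        refine sum_congr rfl fun k _ => ?_
        rw [integral_mul_comp_of_dependsOn hV hind (hdep k),
          integral_comp_eq_sum (hV k) hq (hlaw k), hC, mul_comm]
    _ = ∫ ω, ∑ k ∈ range N, (stayBelow γ k).indicator 1 (fun i => f (V i ω)) * f (V k ω) ∂μ :=
        (integral_finsetSum _ hterm).symm
    _ ≤ ∫ _, γ + b ∂μ := integral_mono (integrable_finsetSum _ hterm) (integrable_const _)
        fun ω => sum_indicator_stayBelow_mul_le (fun k => hb _) hγb N
    _ = γ + b := by simp

lemma integral_exp_neg_max_sub_le [IsProbabilityMeasure μ] (hV : ∀ k, Measurable (V k))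
    (hind : iIndepFun V μ) {q : E → ℝ} (hq : ∀ e, 0 ≤ q e)
    (hlaw : ∀ k e, μ {ω | V k ω = e} = ENNReal.ofReal (q e)) (f : E → ℝ) (γ : ℝ) (n : ℕ) :
    ∫ ω, Real.exp (-max (∑ k ∈ range n, f (V k ω) - γ) 0) ∂μ ≤
      ∫ ω, (stayBelow γ n).indicator 1 (fun i => f (V i ω)) ∂μ +
        ∑ m ∈ range (n + 1), (∫ ω, (firstCrossing γ m).indicator 1 (fun i => f (V i ω)) ∂μ) *
          (∑ e, q e * Real.exp (-f e / 2)) ^ (n - m) := by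
  have hcross : ∀ m, DependsOn (fun v : ℕ → E => (firstCrossing γ m).indicator 1 fun i => f (v i))
      (Set.Iio m) := fun m => (dependsOn_indicator_firstCrossing m).comp_pointwise f
  have hterm : ∀ m ∈ range (n + 1), Integrable (fun ω => (firstCrossing γ m).indicator 1
      (fun i => f (V i ω)) * ∏ k ∈ Ico m n, Real.exp (-f (V k ω) / 2)) μ := fun m hm =>
    integrable_comp_of_dependsOn hV ((hcross m).mul_prod_Ico (fun e => Real.exp (-f e / 2))
      (Nat.lt_succ_iff.1 (mem_range.1 hm)))
  have hbelow : Integrable (fun ω => (stayBelow γ n).indicator 1 (fun i => f (V i ω))) μ :=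
    integrable_comp_of_dependsOn hV ((dependsOn_indicator_stayBelow n).comp_pointwise f)
  have hexp : Integrable (fun ω => Real.exp (-max (∑ k ∈ range n, f (V k ω) - γ) 0)) μ := by
    have hdep : DependsOn (fun v : ℕ → E => Real.exp (-max (∑ k ∈ range n, f (v k) - γ) 0))
        (Set.Iio n) := fun v w h => by
      dsimp only
      rw [sum_congr rfl fun k hk => by rw [h k (mem_range.1 hk)]]
    exact integrable_comp_of_dependsOn hV hdep
  calc _ ≤ ∫ ω, (stayBelow γ n).indicator 1 (fun i => f (V i ω)) +
        ∑ m ∈ range (n + 1), (firstCrossing γ m).indicator 1 (fun i => f (V i ω)) *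
          ∏ k ∈ Ico m n, Real.exp (-f (V k ω) / 2) ∂μ :=
        integral_mono hexp (hbelow.add (integrable_finsetSum _ hterm)) fun ω =>
          exp_neg_max_sub_le _ n
    _ = _ := by
        rw [integral_add hbelow (integrable_finsetSum _ hterm), integral_finsetSum _ hterm]
        exact congrArg _ (sum_congr rfl fun m hm => integral_mul_prod_Ico hV hind hq hlaw
          (hcross m) (fun e => Real.exp (-f e / 2)) (Nat.lt_succ_iff.1 (mem_range.1 hm)))

lemma integral_le_one_of_le_one [IsProbabilityMeasure μ] {g : Ω → ℝ} (h0 : ∀ ω, 0 ≤ g ω)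
    (h1 : ∀ ω, g ω ≤ 1) : ∫ ω, g ω ∂μ ≤ 1 :=
  (integral_mono_of_nonneg (ae_of_all _ h0) (integrable_const 1) (ae_of_all _ h1)).trans_eq
    (by simp)

lemma antitone_integral_indicator_stayBelow [IsFiniteMeasure μ] (hV : ∀ k, Measurable (V k))
    (f : E → ℝ) (γ : ℝ) :
    Antitone fun n => ∫ ω, (stayBelow γ n).indicator (1 : (ℕ → ℝ) → ℝ) (fun i => f (V i ω)) ∂μ :=
  fun m n hmn =>
    integral_mono_of_nonneg (ae_of_all _ fun _ => Set.indicator_nonneg (fun _ _ => zero_le_one) _)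
      (integrable_comp_of_dependsOn hV ((dependsOn_indicator_stayBelow m).comp_pointwise f))
      (ae_of_all _ fun _ => Set.indicator_le_indicator_of_subset
        (show stayBelow γ n ⊆ stayBelow γ m from fun _ hx l hl => hx l (hl.trans hmn))
        (fun _ => zero_le_one) _)

lemma sum_integral_indicator_firstCrossing_le_one [IsProbabilityMeasure μ]
    (hV : ∀ k, Measurable (V k)) (f : E → ℝ) (γ : ℝ) (M : ℕ) :
    ∑ m ∈ range M, ∫ ω, (firstCrossing γ m).indicator (1 : (ℕ → ℝ) → ℝ) (fun i => f (V i ω)) ∂μ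
      ≤ 1 := by
  rw [← integral_finsetSum _ fun m _ =>
    integrable_comp_of_dependsOn hV ((dependsOn_indicator_firstCrossing m).comp_pointwise f)]
  exact integral_le_one_of_le_one
    (fun ω => sum_nonneg fun m _ => Set.indicator_nonneg (fun _ _ => zero_le_one) _)
    (fun ω => sum_indicator_firstCrossing_le_one _ _)

lemma mul_sum_range_integral_exp_neg_max_sub_le [IsProbabilityMeasure μ]
    (hV : ∀ k, Measurable (V k)) (hind : iIndepFun V μ) {q : E → ℝ} (hq : ∀ e, 0 ≤ q e)
    (hlaw : ∀ k e, μ {ω | V k ω = e} = ENNReal.ofReal (q e)) {f : E → ℝ} {C ρ b γ : ℝ}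
    (hC : 0 < C) (hCf : ∑ e, q e * f e = C) (hρ : ∑ e, q e * Real.exp (-f e / 2) = ρ)
    (hρ1 : ρ < 1) (hb : ∀ e, f e ≤ b) (hγb : 0 ≤ γ + b) (n₁ : ℕ) {I : ℕ} (hI : 0 < I) (J : ℕ) :
    I * ∑ j ∈ range J, ∫ ω, Real.exp (-max (∑ k ∈ range (n₁ + j * I), f (V k ω) - γ) 0) ∂μ
      ≤ I + (γ + b) / C + I * (1 - ρ)⁻¹ := by
  set u : ℕ → ℝ := fun n => ∫ ω, (stayBelow γ n).indicator 1 (fun i => f (V i ω)) ∂μ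
  set P : ℕ → ℝ := fun m => ∫ ω, (firstCrossing γ m).indicator 1 (fun i => f (V i ω)) ∂μ
  have hindicator : ∀ (A : Set (ℕ → ℝ)) (x : ℕ → ℝ),
      0 ≤ A.indicator (1 : (ℕ → ℝ) → ℝ) x ∧ A.indicator (1 : (ℕ → ℝ) → ℝ) x ≤ 1 :=
    fun A x => ⟨Set.indicator_nonneg (fun _ _ => zero_le_one) x,
      Set.indicator_le_self' (fun _ _ => zero_le_one) x⟩
  have hu0 : ∀ n, 0 ≤ u n := fun n => integral_nonneg fun ω => (hindicator _ _).1
  have hu1 : ∀ n, u n ≤ 1 := fun n =>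
    integral_le_one_of_le_one (fun ω => (hindicator _ _).1) (fun ω => (hindicator _ _).2)
  have hWald : ∀ N, ∑ k ∈ range N, u k ≤ (γ + b) / C := fun N => by
    rw [le_div_iff₀' hC]
    exact mul_sum_integral_indicator_stayBelow_le hV hind hq hlaw hCf hb hγb N
  have hρ0 : 0 ≤ ρ := hρ ▸ sum_nonneg fun e _ => mul_nonneg (hq e) (Real.exp_pos _).le
  have hn : StrictMono fun j => n₁ + j * I := fun i j hij =>
    Nat.add_lt_add_left (Nat.mul_lt_mul_of_lt_of_le hij le_rfl hI) n₁
  rw [mul_sum]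
  calc ∑ j ∈ range J, I * ∫ ω, Real.exp (-max (∑ k ∈ range (n₁ + j * I), f (V k ω) - γ) 0) ∂μ
      ≤ ∑ j ∈ range J, (I * u (n₁ + j * I) +
          I * ∑ m ∈ range (n₁ + j * I + 1), P m * ρ ^ (n₁ + j * I - m)) :=
        sum_le_sum fun j _ => by
          rw [← mul_add, ← hρ]
          exact mul_le_mul_of_nonneg_left (integral_exp_neg_max_sub_le hV hind hq hlaw f γ _)
            (Nat.cast_nonneg I)
    _ = ∑ j ∈ range J, I * u (n₁ + j * I) +
          I * ∑ j ∈ range J, ∑ m ∈ range (n₁ + j * I + 1), P m * ρ ^ (n₁ + j * I - m) := by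
        rw [sum_add_distrib, mul_sum]
    _ ≤ (I + (γ + b) / C) + I * (1 - ρ)⁻¹ :=
        add_le_add (sum_range_mul_le_of_antitone
            (antitone_integral_indicator_stayBelow hV f γ) hu0 hu1 hWald n₁ I J)
          (mul_le_mul_of_nonneg_left (sum_sum_mul_pow_sub_le hρ0 hρ1
            (fun m => integral_nonneg fun ω => (hindicator _ _).1)
            (sum_integral_indicator_firstCrossing_le_one hV f γ) hn J) (Nat.cast_nonneg I))

theorem summable_integral_exp_neg_max_sub [IsProbabilityMeasure μ]
    (hV : ∀ k, Measurable (V k)) (hind : iIndepFun V μ)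
    {q : E → ℝ} (hq : ∀ e, 0 ≤ q e) (hlaw : ∀ k e, μ {ω | V k ω = e} = ENNReal.ofReal (q e))
    {f : E → ℝ} {C ρ b γ : ℝ} (hC : 0 < C) (hCf : ∑ e, q e * f e = C)
    (hρ : ∑ e, q e * Real.exp (-f e / 2) = ρ) (hρ1 : ρ < 1) (hb : ∀ e, f e ≤ b) (hγb : 0 ≤ γ + b)
    (n₁ : ℕ) {I : ℕ} (hI : 0 < I) :
    Summable (fun j => ∫ ω, Real.exp (-max (∑ k ∈ range (n₁ + j * I), f (V k ω) - γ) 0) ∂μ) ∧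
      I * ∑' j, ∫ ω, Real.exp (-max (∑ k ∈ range (n₁ + j * I), f (V k ω) - γ) 0) ∂μ
        ≤ I + (γ + b) / C + I * (1 - ρ)⁻¹ := by
  have hT0 : ∀ j, 0 ≤ ∫ ω, Real.exp (-max (∑ k ∈ range (n₁ + j * I), f (V k ω) - γ) 0) ∂μ :=
    fun j => integral_nonneg fun ω => (Real.exp_pos _).le
  have hpartial := fun J => (le_div_iff₀' (Nat.cast_pos.2 hI)).2
    (mul_sum_range_integral_exp_neg_max_sub_le hV hind hq hlaw hC hCf hρ hρ1 hb hγb n₁ hI J)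
  exact ⟨summable_of_sum_range_le hT0 hpartial,
    (le_div_iff₀' (Nat.cast_pos.2 hI)).1 (Real.tsum_le_of_sum_range_le hT0 hpartial)⟩

end IID

lemma two_mul_exp_half_le (t : ℝ) : 2 * Real.exp (t / 2) ≤ 1 + Real.exp t := by
  have h : Real.exp t = Real.exp (t / 2) ^ 2 := by rw [← Real.exp_nat_mul]; ring_nf
  nlinarith [sq_nonneg (Real.exp (t / 2) - 1)]

lemma two_mul_exp_half_lt {t : ℝ} (ht : t ≠ 0) : 2 * Real.exp (t / 2) < 1 + Real.exp t := by
  have h : Real.exp t = Real.exp (t / 2) ^ 2 := by rw [← Real.exp_nat_mul]; ring_nf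
  have hne : Real.exp (t / 2) - 1 ≠ 0 := by
    rw [sub_ne_zero, Ne, Real.exp_eq_one_iff]
    exact div_ne_zero ht two_ne_zero
  nlinarith [sq_pos_of_ne_zero hne]

lemma sum_mul_exp_neg_half_lt_one {E : Type*} [Fintype E] {q f : E → ℝ} (hq : ∀ e, 0 < q e)
    (hq1 : ∑ e, q e = 1) (hexp : ∑ e, q e * Real.exp (-f e) = 1) {e₀ : E} (he₀ : f e₀ ≠ 0) :
    ∑ e, q e * Real.exp (-f e / 2) < 1 := by
  have hlt : ∑ e, q e * (2 * Real.exp (-f e / 2)) < ∑ e, q e * (1 + Real.exp (-f e)) :=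
    sum_lt_sum (fun e _ => mul_le_mul_of_nonneg_left (two_mul_exp_half_le _) (hq e).le)
      ⟨e₀, mem_univ _, mul_lt_mul_of_pos_left (two_mul_exp_half_lt (neg_ne_zero.2 he₀)) (hq e₀)⟩
  simp only [mul_add, mul_one, sum_add_distrib, hq1, hexp, mul_left_comm _ (2 : ℝ), ← mul_sum]
    at hlt
  linarith

section Channel

variable {𝒳 𝒴 : Type*} [Fintype 𝒳] {pX : 𝒳 → ℝ} {W : 𝒳 → 𝒴 → ℝ}

lemma outDist_pos [Nonempty 𝒳] (hpX : ∀ x, 0 < pX x) (hW : ∀ x y, 0 < W x y) (y : 𝒴) :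
    0 < outDist pX W y :=
  sum_pos (fun x _ => mul_pos (hpX x) (hW x y)) univ_nonempty

lemma sum_joint_eq_one [Fintype 𝒴] (hpX : ∑ x, pX x = 1) (hW : ∀ x, ∑ y, W x y = 1) :
    ∑ p : 𝒳 × 𝒴, pX p.1 * W p.1 p.2 = 1 := by
  simp only [Fintype.sum_prod_type, ← mul_sum, hW, mul_one, hpX]

lemma sum_outDist [Fintype 𝒴] (hpX : ∑ x, pX x = 1) (hW : ∀ x, ∑ y, W x y = 1) :
    ∑ y, outDist pX W y = 1 := by
  rw [← sum_joint_eq_one hpX hW, Fintype.sum_prod_type, sum_comm]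
  rfl

lemma sum_joint_mul_exp_neg_infoDen [Nonempty 𝒳] [Fintype 𝒴] (hpX : ∀ x, 0 < pX x)
    (hpX1 : ∑ x, pX x = 1) (hW : ∀ x y, 0 < W x y) (hW1 : ∀ x, ∑ y, W x y = 1) :
    ∑ p : 𝒳 × 𝒴, pX p.1 * W p.1 p.2 * Real.exp (-infoDen pX W p.1 p.2) = 1 := by
  have hterm : ∀ x y, pX x * W x y * Real.exp (-infoDen pX W x y) = pX x * outDist pX W y := by
    intro x y
    rw [infoDen, Real.exp_neg, Real.exp_log (div_pos (hW x y) (outDist_pos hpX hW y))]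
    field_simp [(hW x y).ne']
  simp only [Fintype.sum_prod_type, hterm, ← mul_sum, sum_outDist hpX1 hW1, mul_one, hpX1]

end Channel

theorem stmt11_general {𝒳 𝒴 : Type*} [Fintype 𝒳] [Nonempty 𝒳] [Fintype 𝒴]
    [MeasurableSpace 𝒳] [DiscreteMeasurableSpace 𝒳]
    [MeasurableSpace 𝒴] [DiscreteMeasurableSpace 𝒴]
    (pX : 𝒳 → ℝ) (hpXpos : ∀ x, 0 < pX x) (hpXsum : ∑ x, pX x = 1)
    (W : 𝒳 → 𝒴 → ℝ) (hWpos : ∀ x y, 0 < W x y) (hWsum : ∀ x, ∑ y, W x y = 1)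
    (C : ℝ) (hCdef : C = ∑ x, ∑ y, pX x * W x y * infoDen pX W x y)
    -- `P_{XY} ≠ P_X ⊗ P_Y`, equivalently `C > 0`:
    (hC : 0 < C)
    {Ω : Type*} [MeasurableSpace Ω] (μ : Measure Ω) [IsProbabilityMeasure μ]
    (X : ℕ → Ω → 𝒳) (Y : ℕ → Ω → 𝒴)
    (hXm : ∀ k, Measurable (X k)) (hYm : ∀ k, Measurable (Y k))
    -- `((X_k, Y_k))_k` is an i.i.d. sequence with law `P_{XY}`:
    (hXYindep : iIndepFun (fun k ω => (X k ω, Y k ω)) μ)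
    (hXYlaw : ∀ k x y, μ {ω | X k ω = x ∧ Y k ω = y} = ENNReal.ofReal (pX x * W x y)) :
    ∃ K : ℝ, ∀ n₁ I : ℕ, 1 ≤ n₁ → 1 ≤ I → ∀ γ : ℝ, 0 ≤ γ →
      Summable (fun j : ℕ => ∫ ω, Real.exp (-(max
          ((∑ k ∈ Finset.range (n₁ + j * I), infoDen pX W (X k ω) (Y k ω)) - γ) 0)) ∂μ)
      ∧ (n₁ : ℝ) + (I : ℝ) * ∑' j : ℕ, (∫ ω, Real.exp (-(max
            ((∑ k ∈ Finset.range (n₁ + j * I), infoDen pX W (X k ω) (Y k ω)) - γ) 0)) ∂μ)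
          ≤ γ / C + K * ((n₁ : ℝ) + (I : ℝ)) := by
  set q : 𝒳 × 𝒴 → ℝ := fun p => pX p.1 * W p.1 p.2
  set f : 𝒳 × 𝒴 → ℝ := fun p => infoDen pX W p.1 p.2
  have hq : ∀ p, 0 < q p := fun p => mul_pos (hpXpos _) (hWpos _ _)
  have hlaw : ∀ k p, μ {ω | (X k ω, Y k ω) = p} = ENNReal.ofReal (q p) := fun k p => by
    simpa only [Prod.ext_iff] using hXYlaw k p.1 p.2
  have hCf : ∑ p, q p * f p = C := by rw [hCdef, Fintype.sum_prod_type]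
  obtain ⟨p₀, hp₀⟩ : ∃ p, f p ≠ 0 := by
    by_contra! h
    exact hC.ne' (by rw [← hCf]; simp [h])
  have hρ1 := sum_mul_exp_neg_half_lt_one hq (sum_joint_eq_one hpXsum hWsum)
    (sum_joint_mul_exp_neg_infoDen hpXpos hpXsum hWpos hWsum) hp₀
  set ρ := ∑ p, q p * Real.exp (-f p / 2)
  set b := ∑ p, |f p|
  have hb : ∀ p, f p ≤ b := fun p =>
    (le_abs_self _).trans (single_le_sum (fun p _ => abs_nonneg (f p)) (mem_univ p))
  have hb0 : 0 ≤ b := sum_nonneg fun p _ => abs_nonneg _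
  refine ⟨1 + b / C + (1 - ρ)⁻¹, fun n₁ I _ hI γ hγ => ?_⟩
  obtain ⟨hsum, hle⟩ := summable_integral_exp_neg_max_sub (fun k => (hXm k).prodMk (hYm k))
    hXYindep (fun p => (hq p).le) hlaw hC hCf rfl hρ1 hb (by linarith) n₁ hI
  refine ⟨hsum, ?_⟩
  have hnI : (1 : ℝ) ≤ n₁ + I := by norm_cast; omega
  have hIn : (I : ℝ) ≤ n₁ + I := le_add_of_nonneg_left n₁.cast_nonneg
  linarith [mul_le_mul_of_nonneg_left hnI (div_nonneg hb0 hC.le),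
    mul_le_mul_of_nonneg_left hIn (inv_nonneg.2 (sub_nonneg.2 hρ1.le)), add_div γ b C]

/-- There is a finite constant `K` (depending only on `P_X` and `W`)
such that for all integers `n₁ ≥ 1`, `I ≥ 1` and all reals `γ ≥ 0`, with
`n_j = n₁ + (j−1)·I` (here indexed so that `n_j = n₁ + j·I`, `j : ℕ`),
`n₁ + I · Σ_{j=1}^∞ E[exp(−[S_{n_j} − γ]⁺)] ≤ γ/C + K·(n₁ + I)`. -/
theorem stmt11 {𝒳 𝒴 : Type*} [Fintype 𝒳] [Nonempty 𝒳] [Fintype 𝒴] [Nonempty 𝒴]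
    [MeasurableSpace 𝒳] [DiscreteMeasurableSpace 𝒳]
    [MeasurableSpace 𝒴] [DiscreteMeasurableSpace 𝒴]
    (pX : 𝒳 → ℝ) (hpXpos : ∀ x, 0 < pX x) (hpXsum : ∑ x, pX x = 1)
    (W : 𝒳 → 𝒴 → ℝ) (hWpos : ∀ x y, 0 < W x y) (hWsum : ∀ x, ∑ y, W x y = 1)
    (C : ℝ) (hCdef : C = ∑ x, ∑ y, pX x * W x y * infoDen pX W x y)
    -- `P_{XY} ≠ P_X ⊗ P_Y`, equivalently `C > 0`:
    (hC : 0 < C)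
    {Ω : Type*} [MeasurableSpace Ω] (μ : Measure Ω) [IsProbabilityMeasure μ]
    (X : ℕ → Ω → 𝒳) (Y : ℕ → Ω → 𝒴)
    (hXm : ∀ k, Measurable (X k)) (hYm : ∀ k, Measurable (Y k))
    -- `((X_k, Y_k))_k` is an i.i.d. sequence with law `P_{XY}`:
    (hXYindep : iIndepFun (fun k ω => (X k ω, Y k ω)) μ)
    (hXYlaw : ∀ k x y, μ {ω | X k ω = x ∧ Y k ω = y} = ENNReal.ofReal (pX x * W x y)) :
    ∃ K : ℝ, ∀ n₁ I : ℕ, 1 ≤ n₁ → 1 ≤ I → ∀ γ : ℝ, 0 ≤ γ →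
      Summable (fun j : ℕ => ∫ ω, Real.exp (-(max
          ((∑ k ∈ Finset.range (n₁ + j * I), infoDen pX W (X k ω) (Y k ω)) - γ) 0)) ∂μ)
      ∧ (n₁ : ℝ) + (I : ℝ) * ∑' j : ℕ, (∫ ω, Real.exp (-(max
            ((∑ k ∈ Finset.range (n₁ + j * I), infoDen pX W (X k ω) (Y k ω)) - γ) 0)) ∂μ)
          ≤ γ / C + K * ((n₁ : ℝ) + (I : ℝ)) :=
  stmt11_general pX hpXpos hpXsum W hWpos hWsum C hCdef hC μ X Y hXm hYm hXYindep hXYlaw
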